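/- arXiv:2405.05512 — 6 statements merged into one kernel-verified Lean document; each statement's English description precedes it below -/
import Mathlib

section
/- The tilted mean ū is differentiable on ℝ^d, and its Jacobian matrix equals (β/s²) times the covariance matrix of the tilted measure: for every x ∈ ℝ^d, Dū(x) = (β/s²) ( ∫ u uᵀ dκ_x(u) − ū(x) ū(x)ᵀ ). -/
/-!
Differentiation under the integral sign is legitimate because `ν` lives on a compact set and
all integrands are jointly continuous. The derivative of the weight `w = exp (c * ‖x - β • u‖ ^ 2)`
in direction `y` is `w * 2c ⟪x - β • u, y⟫`, so the quotient rule turns the derivative of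
`ū = (∫ w)⁻¹ • ∫ w • u` into the `κ_x`-covariance of `u` with `2c ⟪x - β • u, y⟫`. The summand
`2c ⟪x, y⟫` does not depend on `u` and drops out, leaving `-2cβ` times the covariance of `u`
with `⟪u, y⟫`; for the paper's weight `c = -(2 s²)⁻¹`, so `-2cβ = β / s²`.
-/

open MeasureTheory Real
open scoped RealInnerProductSpace

noncomputable section

section CompactlySupportedMeasure

variable {α E G : Type*} [TopologicalSpace α] [T2Space α] [MeasurableSpace α]
  [OpensMeasurableSpace α] [NormedAddCommGroup E] [NormedSpace ℝ E] [ProperSpace E]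
  [NormedAddCommGroup G] {ν : Measure α} [IsFiniteMeasureOnCompacts ν] {K : Set α}

theorem Continuous.integrable_of_ae_mem_isCompact {f : α → G} (hf : Continuous f)
    (hK : IsCompact K) (hνK : ∀ᵐ u ∂ν, u ∈ K) : Integrable f ν := by
  simpa [IntegrableOn, Measure.restrict_eq_self_of_ae_mem hνK] using
    hf.continuousOn.integrableOn_compact (μ := ν) hK

theorem hasFDerivAt_integral_of_ae_mem_isCompact [NormedSpace ℝ G] [CompleteSpace G]
    {F : E → α → G} {F' : E → α → E →L[ℝ] G} (hK : IsCompact K) (hνK : ∀ᵐ u ∂ν, u ∈ K)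
    (hF : ∀ x, Continuous (F x)) (hF' : Continuous (Function.uncurry F'))
    (hderiv : ∀ x u, HasFDerivAt (F · u) (F' x u) x) (x₀ : E) :
    HasFDerivAt (fun x ↦ ∫ u, F x u ∂ν) (∫ u, F' x₀ u ∂ν) x₀ := by
  obtain ⟨C, hC⟩ := ((isCompact_closedBall x₀ 1).prod hK).exists_bound_of_continuousOn
    hF'.continuousOn
  have : IsFiniteMeasure ν := by
    rw [← Measure.restrict_eq_self_of_ae_mem hνK]
    exact isFiniteMeasure_restrict.2 hK.measure_lt_top.ne
  have hF_int x : Integrable (F x) ν := (hF x).integrable_of_ae_mem_isCompact hK hνK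
  have hF'_int : Integrable (F' x₀) ν :=
    (hF'.comp (Continuous.prodMk_right x₀)).integrable_of_ae_mem_isCompact hK hνK
  refine hasFDerivAt_integral_of_dominated_of_fderiv_le (bound := fun _ ↦ C)
    (Metric.closedBall_mem_nhds x₀ one_pos) (.of_forall fun x ↦ (hF_int x).aestronglyMeasurable)
    (hF_int x₀) hF'_int.aestronglyMeasurable ?_ (integrable_const C)
    (.of_forall fun u x _ ↦ hderiv x u)
  filter_upwards [hνK] with u hu x hx using hC (x, u) ⟨hx, hu⟩

end CompactlySupportedMeasure

theorem HasFDerivAt.inv_smul {E F : Type*} [NormedAddCommGroup E] [NormedSpace ℝ E]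
    [NormedAddCommGroup F] [NormedSpace ℝ F] {Z : E → ℝ} {M : E → F} {Z' : E →L[ℝ] ℝ}
    {M' : E →L[ℝ] F} {x : E} (hZ : HasFDerivAt Z Z' x) (hM : HasFDerivAt M M' x)
    (hx : Z x ≠ 0) :
    HasFDerivAt (fun x ↦ (Z x)⁻¹ • M x) ((Z x)⁻¹ • (M' - Z'.smulRight ((Z x)⁻¹ • M x))) x := by
  refine (((hasDerivAt_inv hx).comp_hasFDerivAt x hZ).smul hM).congr_fderiv ?_
  ext y
  simp only [Function.comp_apply, neg_smul, add_apply, smul_apply,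
    ContinuousLinearMap.smulRight_apply, neg_apply, smul_eq_mul, sub_apply]
  match_scalars <;> field_simp

section GaussianWeight

variable {E : Type*} [NormedAddCommGroup E] [InnerProductSpace ℝ E]

def gaussWeight (c β : ℝ) (x u : E) : ℝ := exp (c * ‖x - β • u‖ ^ 2)

variable (c β : ℝ)

@[fun_prop]
theorem continuous_gaussWeight : Continuous fun p : E × E ↦ gaussWeight c β p.1 p.2 := by
  unfold gaussWeight
  fun_prop

theorem hasFDerivAt_gaussWeight (x u : E) :
    HasFDerivAt (gaussWeight c β · u)
      ((2 * c * gaussWeight c β x u) • innerSL ℝ (x - β • u)) x := by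
  refine (((hasFDerivAt_id x).sub_const (β • u)).norm_sq.const_mul c).exp.congr_fderiv ?_
  ext y
  simp only [id_eq, map_sub, map_smul, ContinuousLinearMap.comp_id, smul_apply, sub_apply,
    coe_innerSL_apply, smul_eq_mul, nsmul_eq_mul, Nat.cast_ofNat, gaussWeight]
  ring

theorem fderiv_gaussWeight_apply (x u y : E) :
    ((2 * c * gaussWeight c β x u) • innerSL ℝ (x - β • u)) y =
      2 * c * ⟪x, y⟫ * gaussWeight c β x u + -2 * c * β * (gaussWeight c β x u * ⟪u, y⟫) := by
  rw [smul_apply, innerSL_apply_apply, smul_eq_mul, inner_sub_left, real_inner_smul_left]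
  ring

theorem continuous_fderiv_gaussWeight :
    Continuous fun p : E × E ↦
      (2 * c * gaussWeight c β p.1 p.2) • innerSL ℝ (p.1 - β • p.2) := by
  fun_prop

theorem continuous_fderiv_gaussWeight_smulRight :
    Continuous fun p : E × E ↦
      ((2 * c * gaussWeight c β p.1 p.2) • innerSL ℝ (p.1 - β • p.2)).smulRight p.2 :=
  isBoundedBilinearMap_smulRight.continuous.comp
    ((continuous_fderiv_gaussWeight c β).prodMk continuous_snd)

end GaussianWeight

section TiltedMean

variable {E : Type*} [NormedAddCommGroup E] [InnerProductSpace ℝ E] [MeasurableSpace E]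
  [BorelSpace E]

/-- For `c = -(2 s²)⁻¹` this is the paper's `ū`, the mean of the tilted measure `κ_x`. -/
def tiltedMean (c β : ℝ) (ν : Measure E) (x : E) : E :=
  (∫ u, gaussWeight c β x u ∂ν)⁻¹ • ∫ u, gaussWeight c β x u • u ∂ν

variable {ν : Measure E} [IsFiniteMeasureOnCompacts ν] {K : Set E} (c β : ℝ)

theorem integral_gaussWeight_pos [NeZero ν] (hK : IsCompact K) (hνK : ∀ᵐ u ∂ν, u ∈ K)
    (x : E) : 0 < ∫ u, gaussWeight c β x u ∂ν :=
  integral_exp_pos <|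
    (by fun_prop : Continuous (gaussWeight c β x)).integrable_of_ae_mem_isCompact hK hνK

theorem integral_fderiv_gaussWeight_smulRight_apply (hK : IsCompact K)
    (hνK : ∀ᵐ u ∂ν, u ∈ K) (x y : E) :
    (∫ u, ((2 * c * gaussWeight c β x u) • innerSL ℝ (x - β • u)).smulRight u ∂ν) y =
      (2 * c * ⟪x, y⟫) • (∫ u, gaussWeight c β x u • u ∂ν) +
        (-2 * c * β) • ∫ u, (gaussWeight c β x u * ⟪u, y⟫) • u ∂ν := by
  have integrable_w_smul : Integrable (fun u ↦ gaussWeight c β x u • u) ν :=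
    (by fun_prop : Continuous fun u ↦ gaussWeight c β x u • u).integrable_of_ae_mem_isCompact
      hK hνK
  have integrable_w_inner_smul : Integrable (fun u ↦ (gaussWeight c β x u * ⟪u, y⟫) • u) ν :=
    (by fun_prop : Continuous fun u ↦ (gaussWeight c β x u * ⟪u, y⟫) • u)
      |>.integrable_of_ae_mem_isCompact hK hνK
  have h u : (((2 * c * gaussWeight c β x u) • innerSL ℝ (x - β • u)).smulRight u) y =
      (2 * c * ⟪x, y⟫) • (gaussWeight c β x u • u) +
        (-2 * c * β) • ((gaussWeight c β x u * ⟪u, y⟫) • u) := by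
    rw [ContinuousLinearMap.smulRight_apply, fderiv_gaussWeight_apply]
    module
  rw [ContinuousLinearMap.integral_apply (by
      exact ((continuous_fderiv_gaussWeight_smulRight c β).comp
        (Continuous.prodMk_right x)).integrable_of_ae_mem_isCompact hK hνK),
    integral_congr_ae (.of_forall h),
    integral_add (by exact integrable_w_smul.smul _) (by exact integrable_w_inner_smul.smul _),
    integral_smul, integral_smul]

variable [FiniteDimensional ℝ E]

theorem hasFDerivAt_integral_gaussWeight (hK : IsCompact K) (hνK : ∀ᵐ u ∂ν, u ∈ K) (x : E) :
    HasFDerivAt (fun x ↦ ∫ u, gaussWeight c β x u ∂ν)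
      (∫ u, (2 * c * gaussWeight c β x u) • innerSL ℝ (x - β • u) ∂ν) x :=
  hasFDerivAt_integral_of_ae_mem_isCompact hK hνK (fun _ ↦ by fun_prop)
    (continuous_fderiv_gaussWeight c β) (hasFDerivAt_gaussWeight c β) x

theorem hasFDerivAt_integral_gaussWeight_smul (hK : IsCompact K) (hνK : ∀ᵐ u ∂ν, u ∈ K)
    (x : E) :
    HasFDerivAt (fun x ↦ ∫ u, gaussWeight c β x u • u ∂ν)
      (∫ u, ((2 * c * gaussWeight c β x u) • innerSL ℝ (x - β • u)).smulRight u ∂ν) x :=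
  hasFDerivAt_integral_of_ae_mem_isCompact hK hνK (fun _ ↦ by fun_prop)
    (continuous_fderiv_gaussWeight_smulRight c β)
    (fun x u ↦ (hasFDerivAt_gaussWeight c β x u).smul_const u) x

theorem integral_fderiv_gaussWeight_apply (hK : IsCompact K) (hνK : ∀ᵐ u ∂ν, u ∈ K)
    (x y : E) :
    (∫ u, (2 * c * gaussWeight c β x u) • innerSL ℝ (x - β • u) ∂ν) y =
      2 * c * ⟪x, y⟫ * (∫ u, gaussWeight c β x u ∂ν) +
        -2 * c * β * ⟪∫ u, gaussWeight c β x u • u ∂ν, y⟫ := by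
  have integrable_w : Integrable (gaussWeight c β x) ν :=
    (by fun_prop : Continuous (gaussWeight c β x)).integrable_of_ae_mem_isCompact hK hνK
  have integrable_w_inner : Integrable (fun u ↦ gaussWeight c β x u * ⟪u, y⟫) ν :=
    (by fun_prop : Continuous fun u ↦ gaussWeight c β x u * ⟪u, y⟫).integrable_of_ae_mem_isCompact
      hK hνK
  have integrable_w_smul : Integrable (fun u ↦ gaussWeight c β x u • u) ν :=
    (by fun_prop : Continuous fun u ↦ gaussWeight c β x u • u).integrable_of_ae_mem_isCompact
      hK hνK
  have inner_integral : ⟪∫ u, gaussWeight c β x u • u ∂ν, y⟫ =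
      ∫ u, gaussWeight c β x u * ⟪u, y⟫ ∂ν := by
    rw [real_inner_comm, ← integral_inner integrable_w_smul]
    simp only [real_inner_comm _ y, real_inner_smul_left]
  rw [ContinuousLinearMap.integral_apply (by exact ((continuous_fderiv_gaussWeight c β).comp
      (Continuous.prodMk_right x)).integrable_of_ae_mem_isCompact hK hνK),
    integral_congr_ae (.of_forall fun u ↦ fderiv_gaussWeight_apply c β x u y),
    integral_add (integrable_w.const_mul _) (integrable_w_inner.const_mul _),
    integral_const_mul, integral_const_mul, inner_integral]

theorem hasFDerivAt_tiltedMean [NeZero ν] (hK : IsCompact K) (hνK : ∀ᵐ u ∂ν, u ∈ K) (x : E) :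
    HasFDerivAt (tiltedMean c β ν)
      ((∫ u, gaussWeight c β x u ∂ν)⁻¹ •
        ((∫ u, ((2 * c * gaussWeight c β x u) • innerSL ℝ (x - β • u)).smulRight u ∂ν) -
          (∫ u, (2 * c * gaussWeight c β x u) • innerSL ℝ (x - β • u) ∂ν).smulRight
            (tiltedMean c β ν x))) x :=
  (hasFDerivAt_integral_gaussWeight c β hK hνK x).inv_smul
    (hasFDerivAt_integral_gaussWeight_smul c β hK hνK x)
    (integral_gaussWeight_pos c β hK hνK x).ne'

theorem fderiv_tiltedMean_apply [NeZero ν] (hK : IsCompact K) (hνK : ∀ᵐ u ∂ν, u ∈ K)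
    (x y : E) :
    fderiv ℝ (tiltedMean c β ν) x y =
      (-2 * c * β) • ((∫ u, gaussWeight c β x u ∂ν)⁻¹ •
          (∫ u, (gaussWeight c β x u * ⟪u, y⟫) • u ∂ν) -
        ⟪tiltedMean c β ν x, y⟫ • tiltedMean c β ν x) := by
  have hZ := (integral_gaussWeight_pos c β hK hνK x).ne'
  rw [(hasFDerivAt_tiltedMean c β hK hνK x).fderiv]
  simp only [smul_apply, sub_apply, ContinuousLinearMap.smulRight_apply]
  rw [integral_fderiv_gaussWeight_apply c β hK hνK,
    integral_fderiv_gaussWeight_smulRight_apply c β hK hνK]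
  simp only [tiltedMean, real_inner_smul_left]
  match_scalars
  · field_simp
    ring
  · field_simp

end TiltedMean

theorem jacobian_of_tilted_mean_general
    {d : ℕ}
    (ν : Measure (EuclideanSpace ℝ (Fin d))) [IsProbabilityMeasure ν]
    (hνsupp : ∀ᵐ u ∂ν, ∀ i, u i ∈ Set.Icc (0 : ℝ) 1)
    (β : ℝ) (s2 : ℝ)
    (w : EuclideanSpace ℝ (Fin d) → EuclideanSpace ℝ (Fin d) → ℝ)
    (hw : ∀ x u, w x u = Real.exp (-‖x - β • u‖ ^ 2 / (2 * s2)))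
    (ubar : EuclideanSpace ℝ (Fin d) → EuclideanSpace ℝ (Fin d))
    (hubar : ∀ x, ubar x = (∫ u, w x u ∂ν)⁻¹ • ∫ u, w x u • u ∂ν) :
    Differentiable ℝ ubar ∧
      ∀ x y : EuclideanSpace ℝ (Fin d),
        fderiv ℝ ubar x y =
          (β / s2) •
            ((∫ u, w x u ∂ν)⁻¹ • (∫ u, (w x u * ⟪u, y⟫) • u ∂ν)
              - ⟪ubar x, y⟫ • ubar x) := by
  have hw' : w = gaussWeight (-(2 * s2)⁻¹) β := by
    ext x u
    rw [hw, gaussWeight, neg_div, div_eq_inv_mul, neg_mul]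
  have hubar' : ubar = tiltedMean (-(2 * s2)⁻¹) β ν := by
    ext1 x
    rw [hubar, hw', tiltedMean]
  subst hw' hubar'
  have hcube : IsCompact {u : EuclideanSpace ℝ (Fin d) | ∀ i, u i ∈ Set.Icc (0 : ℝ) 1} := by
    simpa [Set.preimage, Set.pi] using
      (EuclideanSpace.equiv (Fin d) ℝ).toHomeomorph.isCompact_preimage.2
        (isCompact_univ_pi fun _ ↦ isCompact_Icc)
  refine ⟨fun x ↦ (hasFDerivAt_tiltedMean _ β hcube hνsupp x).differentiableAt, fun x y ↦ ?_⟩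
  rw [fderiv_tiltedMean_apply _ β hcube hνsupp]
  congr 1
  ring

/-- derivative of the posterior mean equals scaled posterior covariance,
the computation behind Lemma D.3 of the paper. With `ν` a probability measure supported
in the unit cube, `s² = α² + σ²β² > 0`, weight `w(x,u) = exp(-‖x - βu‖²/(2s²))` and tilted
mean `ū(x) = (∫ w(x,u) dν(u))⁻¹ ∫ w(x,u) u dν(u)`, the map `ū` is differentiable and its
Jacobian, applied to a vector `y`, equals `(β/s²)` times the covariance of the tilted
measure `κ_x` applied to `y`:
`Dū(x) y = (β/s²) ( (∫ w(x,u) dν)⁻¹ ∫ w(x,u) ⟪u,y⟫ u dν - ⟪ū(x), y⟫ ū(x) )`. -/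
theorem jacobian_of_tilted_mean
    {d : ℕ} (hd : 1 ≤ d) (σ : ℝ) (hσ : 0 < σ)
    (ν : Measure (EuclideanSpace ℝ (Fin d))) [IsProbabilityMeasure ν]
    (hνsupp : ∀ᵐ u ∂ν, ∀ i, u i ∈ Set.Icc (0 : ℝ) 1)
    (α β : ℝ) (s2 : ℝ) (hs2 : s2 = α ^ 2 + σ ^ 2 * β ^ 2) (hs2pos : 0 < s2)
    (w : EuclideanSpace ℝ (Fin d) → EuclideanSpace ℝ (Fin d) → ℝ)
    (hw : ∀ x u, w x u = Real.exp (-‖x - β • u‖ ^ 2 / (2 * s2)))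
    (ubar : EuclideanSpace ℝ (Fin d) → EuclideanSpace ℝ (Fin d))
    (hubar : ∀ x, ubar x = (∫ u, w x u ∂ν)⁻¹ • ∫ u, w x u • u ∂ν) :
    Differentiable ℝ ubar ∧
      ∀ x y : EuclideanSpace ℝ (Fin d),
        fderiv ℝ ubar x y =
          (β / s2) •
            ((∫ u, w x u ∂ν)⁻¹ • (∫ u, (w x u * ⟪u, y⟫) • u ∂ν)
              - ⟪ubar x, y⟫ • ubar x) :=
  jacobian_of_tilted_mean_general ν hνsupp β s2 w hw ubar hubar
end
end

section
/- There exists a constant B > 0, depending only on d, σ, the bounds sup_{t∈[0,1)}|α_t α̇_t|, sup_{t∈[0,1)}|β̇_t|, and the lower bound inf_{t∈[0,1]}(α_t² + σ²β_t²) > 0, such that for every R > 1, every t ∈ [0,1), and every x ∈ ℝ^d with ‖x‖_∞ ≤ R, each coordinate of the velocity satisfies |b*_k(t,x)| ≤ B·R for all 1 ≤ k ≤ d. -/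
open MeasureTheory Real

noncomputable section

set_option maxHeartbeats 1000000

/-- Proposition III.4 of the paper, local bounded velocity.
Under Condition 3.1 on the interpolation coefficients `α, β` (with derivative data
`α', β'`), the bounds `|α_t α̇_t| ≤ Cα`, `|β̇_t| ≤ Cβ` on `[0,1)` and the lower bound
`0 < clow ≤ α_t² + σ²β_t²` on `[0,1]`, and with `ν` a probability measure supported in
the unit cube, there is a constant `B > 0` such that for every `R > 1`, every
`t ∈ [0,1)` and every `x` with `‖x‖_∞ ≤ R`, each coordinate of the probability-flow
velocity `b*(t,x) = c₁(t) ū_t(x) + c₂(t) x` satisfies `|b*_k(t,x)| ≤ B R`. -/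
theorem velocity_local_bound
    {d : ℕ} (hd : 1 ≤ d) (σ : ℝ) (hσ : 0 < σ)
    (α β α' β' : ℝ → ℝ)
    (hαcont : ContinuousOn α (Set.Icc 0 1)) (hβcont : ContinuousOn β (Set.Icc 0 1))
    (hαderiv : ∀ t ∈ Set.Ico (0 : ℝ) 1, HasDerivWithinAt α (α' t) (Set.Icc 0 1) t)
    (hβderiv : ∀ t ∈ Set.Ico (0 : ℝ) 1, HasDerivWithinAt β (β' t) (Set.Icc 0 1) t)
    (hαanti : AntitoneOn α (Set.Icc 0 1)) (hβmono : MonotoneOn β (Set.Icc 0 1))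
    (hα0 : α 0 = 1) (hα1 : α 1 = 0) (hβ0 : β 0 = 0) (hβ1 : β 1 = 1)
    (hrange : ∀ t ∈ Set.Icc (0 : ℝ) 1,
      α t ∈ Set.Icc (0 : ℝ) 1 ∧ β t ∈ Set.Icc (0 : ℝ) 1)
    (hposdef : ∀ t ∈ Set.Icc (0 : ℝ) 1, 0 < (α t) ^ 2 + (β t) ^ 2)
    (Cα Cβ clow : ℝ) (hclow : 0 < clow)
    (hCα : ∀ t ∈ Set.Ico (0 : ℝ) 1, |α t * α' t| ≤ Cα)
    (hCβ : ∀ t ∈ Set.Ico (0 : ℝ) 1, |β' t| ≤ Cβ)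
    (hlow : ∀ t ∈ Set.Icc (0 : ℝ) 1, clow ≤ (α t) ^ 2 + σ ^ 2 * (β t) ^ 2)
    (ν : Measure (EuclideanSpace ℝ (Fin d))) [IsProbabilityMeasure ν]
    (hνsupp : ∀ᵐ u ∂ν, ∀ i, u i ∈ Set.Icc (0 : ℝ) 1)
    (s2 : ℝ → ℝ) (hs2 : ∀ t, s2 t = (α t) ^ 2 + σ ^ 2 * (β t) ^ 2)
    (w : ℝ → EuclideanSpace ℝ (Fin d) → EuclideanSpace ℝ (Fin d) → ℝ)
    (hw : ∀ t x u, w t x u = Real.exp (-‖x - β t • u‖ ^ 2 / (2 * s2 t)))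
    (ubar : ℝ → EuclideanSpace ℝ (Fin d) → EuclideanSpace ℝ (Fin d))
    (hubar : ∀ t x, ubar t x = (∫ u, w t x u ∂ν)⁻¹ • ∫ u, w t x u • u ∂ν)
    (c₁ c₂ : ℝ → ℝ)
    (hc₁ : ∀ t, c₁ t = α t * (α t * β' t - α' t * β t) / s2 t)
    (hc₂ : ∀ t, c₂ t = (α t * α' t + σ ^ 2 * β t * β' t) / s2 t)
    (bstar : ℝ → EuclideanSpace ℝ (Fin d) → EuclideanSpace ℝ (Fin d))
    (hbstar : ∀ t x, bstar t x = c₁ t • ubar t x + c₂ t • x) :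
    ∃ B > 0, ∀ R > 1, ∀ t ∈ Set.Ico (0 : ℝ) 1,
      ∀ x : EuclideanSpace ℝ (Fin d), (∀ i, |x i| ≤ R) →
        ∀ k, |bstar t x k| ≤ B * R := by

  have hCα0 : 0 ≤ Cα := le_trans (abs_nonneg _) (hCα 0 ⟨le_refl 0, one_pos⟩)
  have hCβ0 : 0 ≤ Cβ := le_trans (abs_nonneg _) (hCβ 0 ⟨le_refl 0, one_pos⟩)
  refine ⟨(2 * Cα + Cβ + σ ^ 2 * Cβ) / clow + 1, by positivity, ?_⟩
  intro R hR t ht x hx k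
  have hR0 : (0:ℝ) < R := lt_trans one_pos hR
  have ht1 : t ∈ Set.Icc (0:ℝ) 1 := ⟨ht.1, ht.2.le⟩
  obtain ⟨hαr, hβr⟩ := hrange t ht1
  have hα1' : |α t| ≤ 1 := abs_le.2 ⟨by linarith [hαr.1], hαr.2⟩
  have hβ1' : |β t| ≤ 1 := abs_le.2 ⟨by linarith [hβr.1], hβr.2⟩
  have hs2low : clow ≤ s2 t := by rw [hs2]; exact hlow t ht1
  have hs2pos : 0 < s2 t := lt_of_lt_of_le hclow hs2low
  -- bounds on c₁ and c₂
  have hαα' := hCα t ht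
  have hβ' := hCβ t ht
  have hc1 : |c₁ t| ≤ (Cα + Cβ) / clow := by
    rw [hc₁, abs_div, abs_of_pos hs2pos]
    refine div_le_div₀ (by positivity) ?_ hclow hs2low
    have heq : α t * (α t * β' t - α' t * β t)
        = α t * α t * β' t - (α t * α' t) * β t := by ring
    rw [heq]
    calc |α t * α t * β' t - α t * α' t * β t|
        ≤ |α t * α t * β' t| + |α t * α' t * β t| := abs_sub _ _
      _ ≤ Cβ + Cα := by
          have h1 : |α t * α t * β' t| ≤ Cβ := by
            rw [abs_mul, abs_mul]
            calc |α t| * |α t| * |β' t| ≤ 1 * 1 * Cβ := by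
                  gcongr <;> first | exact hα1' | exact hβ'
              _ = Cβ := by ring
          have h2 : |α t * α' t * β t| ≤ Cα := by
            rw [abs_mul]
            calc |α t * α' t| * |β t| ≤ Cα * 1 :=
                  mul_le_mul hαα' hβ1' (abs_nonneg _) hCα0
              _ = Cα := mul_one _
          linarith
      _ = Cα + Cβ := by ring
  have hc2 : |c₂ t| ≤ (Cα + σ ^ 2 * Cβ) / clow := by
    rw [hc₂, abs_div, abs_of_pos hs2pos]
    refine div_le_div₀ (by positivity) ?_ hclow hs2low
    calc |α t * α' t + σ ^ 2 * β t * β' t|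
        ≤ |α t * α' t| + |σ ^ 2 * β t * β' t| := abs_add_le _ _
      _ ≤ Cα + σ ^ 2 * Cβ := by
          refine add_le_add hαα' ?_
          have habs : |σ ^ 2 * β t * β' t| = σ ^ 2 * (|β t| * |β' t|) := by
            rw [abs_mul, abs_mul, abs_of_nonneg (sq_nonneg σ)]; ring
          rw [habs]
          have h3 : |β t| * |β' t| ≤ 1 * Cβ :=
            mul_le_mul hβ1' hβ' (abs_nonneg _) one_pos.le
          nlinarith [sq_nonneg σ]
  -- properties of w
  have hwpos : ∀ u, 0 < w t x u := fun u => by rw [hw]; exact Real.exp_pos _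
  have hwle1 : ∀ u, w t x u ≤ 1 := fun u => by
    rw [hw]
    refine Real.exp_le_one_iff.2 ?_
    apply div_nonpos_of_nonpos_of_nonneg
    · exact neg_nonpos.2 (by positivity)
    · positivity
  have hwcont : Continuous (fun u : EuclideanSpace ℝ (Fin d) => w t x u) := by
    have : (fun u : EuclideanSpace ℝ (Fin d) => w t x u)
        = fun u => Real.exp (-‖x - β t • u‖ ^ 2 / (2 * s2 t)) := by
      funext u; rw [hw]
    rw [this]; fun_prop
  -- integrability
  have hintW : Integrable (fun u => w t x u) ν := by
    refine (integrable_const (1:ℝ)).mono' hwcont.aestronglyMeasurable ?_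
    filter_upwards with u
    rw [Real.norm_eq_abs, abs_of_pos (hwpos u)]
    exact hwle1 u
  have hnormu : ∀ᵐ u ∂ν, ‖u‖ ≤ Real.sqrt d := by
    filter_upwards [hνsupp] with u hu
    rw [EuclideanSpace.norm_eq]
    refine Real.sqrt_le_sqrt ?_
    calc ∑ i, ‖u i‖ ^ 2 ≤ ∑ _i : Fin d, (1:ℝ) := by
          refine Finset.sum_le_sum fun i _ => ?_
          have := hu i
          rw [Real.norm_eq_abs, ← one_pow 2]
          refine pow_le_pow_left₀ (abs_nonneg _) ?_ 2
          rw [abs_le]; exact ⟨by linarith [this.1], this.2⟩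
      _ = d := by simp
  have hintWU : Integrable (fun u => w t x u • u) ν := by
    refine (integrable_const (Real.sqrt d)).mono'
      (hwcont.smul continuous_id).aestronglyMeasurable ?_
    filter_upwards [hnormu] with u hu
    rw [norm_smul, Real.norm_eq_abs, abs_of_pos (hwpos u)]
    calc w t x u * ‖u‖ ≤ 1 * Real.sqrt d := by
          exact mul_le_mul (hwle1 u) hu (norm_nonneg _) one_pos.le
      _ = Real.sqrt d := one_mul _
  -- positivity of ∫ w
  have hlb : ∀ᵐ u ∂ν, Real.exp (-(d * (R+1)^2) / (2 * clow)) ≤ w t x u := by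
    filter_upwards [hνsupp] with u hu
    rw [hw]
    refine Real.exp_le_exp.2 ?_
    rw [div_le_div_iff₀ (by positivity) (by positivity), neg_mul, neg_mul,
      neg_le_neg_iff]
    have hnorm : ‖x - β t • u‖ ^ 2 ≤ d * (R+1)^2 := by
      rw [EuclideanSpace.norm_eq, Real.sq_sqrt (by positivity)]
      calc ∑ i, ‖(x - β t • u) i‖ ^ 2 ≤ ∑ _i : Fin d, (R+1)^2 := by
            refine Finset.sum_le_sum fun i _ => ?_
            have hxi : |(x - β t • u) i| ≤ R + 1 := by
              have : (x - β t • u) i = x i - β t * u i := by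
                simp [PiLp.sub_apply, PiLp.smul_apply, smul_eq_mul]
              rw [this]
              calc |x i - β t * u i| ≤ |x i| + |β t * u i| := abs_sub _ _
                _ ≤ R + 1 := by
                    refine add_le_add (hx i) ?_
                    rw [abs_mul]
                    have hui : |u i| ≤ 1 := abs_le.2 ⟨by linarith [(hu i).1], (hu i).2⟩
                    nlinarith [abs_nonneg (β t), abs_nonneg (u i)]
            rw [Real.norm_eq_abs]
            exact pow_le_pow_left₀ (abs_nonneg _) hxi 2
        _ = d * (R+1)^2 := by simp [mul_comm]
    calc ‖x - β t • u‖ ^ 2 * (2 * clow) ≤ (d * (R+1)^2) * (2 * s2 t) := by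
          refine mul_le_mul hnorm (by linarith) (by positivity) (by positivity)
      _ = d * (R+1)^2 * (2 * s2 t) := rfl
  have hIWpos : 0 < ∫ u, w t x u ∂ν := by
    have h1 : Real.exp (-(d * (R+1)^2) / (2 * clow))
        = ∫ _u, Real.exp (-(d * (R+1)^2) / (2 * clow)) ∂ν := by
      simp [integral_const]
    calc (0:ℝ) < Real.exp (-(d * (R+1)^2) / (2 * clow)) := Real.exp_pos _
      _ = ∫ _u, Real.exp (-(d * (R+1)^2) / (2 * clow)) ∂ν := h1
      _ ≤ ∫ u, w t x u ∂ν := integral_mono_ae (integrable_const _) hintW hlb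
  -- coordinate of the vector integral
  have hproj : (∫ u, w t x u • u ∂ν) k = ∫ u, w t x u * u k ∂ν := by
    have h := ContinuousLinearMap.integral_comp_comm (EuclideanSpace.proj (𝕜 := ℝ) k)
      hintWU
    calc (∫ u, w t x u • u ∂ν) k
        = (EuclideanSpace.proj (𝕜 := ℝ) k) (∫ u, w t x u • u ∂ν) := rfl
      _ = ∫ u, (EuclideanSpace.proj (𝕜 := ℝ) k) (w t x u • u) ∂ν := h.symm
      _ = ∫ u, w t x u * u k ∂ν := rfl
  have hubark : |ubar t x k| ≤ 1 := by
    rw [hubar]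
    have : ((∫ u, w t x u ∂ν)⁻¹ • ∫ u, w t x u • u ∂ν) k
        = (∫ u, w t x u ∂ν)⁻¹ * (∫ u, w t x u • u ∂ν) k := rfl
    rw [this, hproj, abs_mul, abs_of_pos (inv_pos.2 hIWpos)]
    rw [inv_mul_le_iff₀ hIWpos, mul_one]
    calc |∫ u, w t x u * u k ∂ν| = ‖∫ u, w t x u * u k ∂ν‖ := (Real.norm_eq_abs _).symm
      _ ≤ ∫ u, w t x u ∂ν := by
          refine norm_integral_le_of_norm_le hintW ?_
          filter_upwards [hνsupp] with u hu
          rw [Real.norm_eq_abs, abs_mul, abs_of_pos (hwpos u)]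
          have hui : |u k| ≤ 1 := abs_le.2 ⟨by linarith [(hu k).1], (hu k).2⟩
          nlinarith [(hwpos u).le, abs_nonneg (u k)]
  -- conclude
  have hbk : bstar t x k = c₁ t * ubar t x k + c₂ t * x k := by
    rw [hbstar]; rfl
  rw [hbk]
  calc |c₁ t * ubar t x k + c₂ t * x k|
      ≤ |c₁ t| * |ubar t x k| + |c₂ t| * |x k| := by
        refine (abs_add_le _ _).trans ?_
        rw [abs_mul, abs_mul]
    _ ≤ (Cα + Cβ) / clow * 1 + (Cα + σ ^ 2 * Cβ) / clow * R := by
        refine add_le_add (mul_le_mul hc1 hubark (abs_nonneg _) (by positivity)) ?_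
        exact mul_le_mul hc2 (hx k) (abs_nonneg _) (by positivity)
    _ ≤ ((2 * Cα + Cβ + σ ^ 2 * Cβ) / clow + 1) * R := by
        rw [mul_one]
        have h1 : (Cα + Cβ) / clow ≤ (Cα + Cβ) / clow * R := by
          nlinarith [div_nonneg (by linarith : (0:ℝ) ≤ Cα + Cβ) hclow.le]
        have h2 : (Cα + Cβ) / clow * R + (Cα + σ ^ 2 * Cβ) / clow * R
            = ((2 * Cα + Cβ + σ ^ 2 * Cβ) / clow) * R := by
          field_simp; ring
        nlinarith [h1, h2]
end
end

section
/- There exists a constant G > 0, depending only on d, σ, the bounds sup_{t∈[0,1)}|α_t α̇_t|, sup_{t∈[0,1)}|β̇_t|, and the lower bound inf_{t∈[0,1]}(α_t² + σ²β_t²) > 0, such that for every t ∈ [0,1) and all x, x′ ∈ ℝ^d, ‖b*(t,x) − b*(t,x′)‖₂ ≤ G ‖x − x′‖₂; that is, the velocity field is Lipschitz continuous in the spatial variable, uniformly in time. -/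
/-!
Moving the centre of the Gaussian weight from `x` to `x'` multiplies it, up to a factor
independent of `u`, by the tilt `exp (-β_t ⟪x - x', u⟫ / s_t²)`. On the support of `ν`
(`‖u‖ ≤ √d`) this tilt is within relative error `2T` of `1`, where `T = β_t √d ‖x - x'‖ / s_t²`,
as long as `T ≤ 1`; and two tilted means of a measure carried by a ball of radius `R` whose
weights agree up to relative error `ε` are at distance at most `2Rε`. For `T > 1` the trivial
bound `2R` suffices. So `ū_t` is `4 d β_t / s_t²`-Lipschitz, and `s_t² ≥ clow` together with the
bounds on `α α̇` and `β̇` bound `c₁` and `c₂` uniformly in `t`.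
-/
open MeasureTheory Real

noncomputable section

section WeightedMean

variable {E : Type*} [NormedAddCommGroup E] [NormedSpace ℝ E]
  [MeasurableSpace E] {ν : Measure E} {w w' : E → ℝ} {R : ℝ}

def weightedMean (ν : Measure E) (w : E → ℝ) : E :=
  (∫ u, w u ∂ν)⁻¹ • ∫ u, w u • u ∂ν

theorem weightedMean_const_mul {c : ℝ} (hc : c ≠ 0) :
    weightedMean ν (fun u => c * w u) = weightedMean ν w := by
  rw [weightedMean, weightedMean, integral_const_mul]
  simp_rw [← smul_smul]
  rw [integral_smul, smul_smul, mul_inv_rev, inv_mul_cancel_right₀ hc]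

theorem norm_weightedMean_le (hw0 : 0 ≤ᵐ[ν] w) (hZ : 0 < ∫ u, w u ∂ν)
    (hR : ∀ᵐ u ∂ν, ‖u‖ ≤ R) : ‖weightedMean ν w‖ ≤ R := by
  have hw : Integrable w ν := Integrable.of_integral_ne_zero hZ.ne'
  have hbound : ‖∫ u, w u • u ∂ν‖ ≤ (∫ u, w u ∂ν) * R := by
    rw [← integral_mul_const]
    refine norm_integral_le_of_norm_le (hw.mul_const R) ?_
    filter_upwards [hw0, hR] with u hu0 huR
    rw [norm_smul, Real.norm_of_nonneg hu0]
    exact mul_le_mul_of_nonneg_left huR hu0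
  rw [weightedMean, norm_smul, Real.norm_of_nonneg (inv_nonneg.2 hZ.le), inv_mul_le_iff₀ hZ]
  exact hbound

variable [CompleteSpace E]

theorem weightedMean_sub (c : E) (hZ : 0 < ∫ u, w u ∂ν)
    (hwu : Integrable (fun u => w u • u) ν) :
    weightedMean ν w - c = (∫ u, w u ∂ν)⁻¹ • ∫ u, w u • (u - c) ∂ν := by
  have hw : Integrable w ν := Integrable.of_integral_ne_zero hZ.ne'
  simp_rw [smul_sub]
  rw [integral_sub hwu (hw.smul_const c), integral_smul_const, smul_sub, smul_smul,
    inv_mul_cancel₀ hZ.ne', one_smul, weightedMean]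

theorem norm_weightedMean_sub_le {ε : ℝ} (hZ : 0 < ∫ u, w u ∂ν) (hZ' : 0 < ∫ u, w' u ∂ν)
    (hw'0 : 0 ≤ᵐ[ν] w') (hwu : Integrable (fun u => w u • u) ν)
    (hw'u : Integrable (fun u => w' u • u) ν) (hR : ∀ᵐ u ∂ν, ‖u‖ ≤ R)
    (hε : ∀ᵐ u ∂ν, |w u - w' u| ≤ ε * w u) :
    ‖weightedMean ν w - weightedMean ν w'‖ ≤ 2 * R * ε := by
  set m := weightedMean ν w'
  have hw : Integrable w ν := Integrable.of_integral_ne_zero hZ.ne'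
  have hm : ‖m‖ ≤ R := norm_weightedMean_le hw'0 hZ' hR
  have hcentred : ∫ u, w' u • (u - m) ∂ν = 0 := by
    have := weightedMean_sub m hZ' hw'u
    rwa [sub_self, eq_comm, smul_eq_zero_iff_right (inv_ne_zero hZ'.ne')] at this
  have hdiff : ∫ u, w u • (u - m) ∂ν = ∫ u, (w u - w' u) • (u - m) ∂ν := by
    have hint (v : E → ℝ) (hv : Integrable v ν) (hvu : Integrable (fun u => v u • u) ν) :
        Integrable (fun u => v u • (u - m)) ν := by
      simp_rw [smul_sub]; exact hvu.sub (hv.smul_const m)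
    simp_rw [sub_smul]
    rw [integral_sub (hint w hw hwu) (hint w' (Integrable.of_integral_ne_zero hZ'.ne') hw'u),
      hcentred, sub_zero]
  have hbound : ‖∫ u, (w u - w' u) • (u - m) ∂ν‖ ≤ (∫ u, w u ∂ν) * (2 * R * ε) := by
    rw [← integral_mul_const]
    refine norm_integral_le_of_norm_le (hw.mul_const _) ?_
    filter_upwards [hR, hε] with u huR huε
    have hum : ‖u - m‖ ≤ 2 * R := by linarith [norm_sub_le u m]
    rw [norm_smul, Real.norm_eq_abs]
    calc |w u - w' u| * ‖u - m‖ ≤ ε * w u * (2 * R) :=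
          mul_le_mul huε hum (norm_nonneg _) ((abs_nonneg _).trans huε)
      _ = w u * (2 * R * ε) := by ring
  rw [weightedMean_sub m hZ hwu, hdiff, norm_smul, Real.norm_of_nonneg (inv_nonneg.2 hZ.le),
    inv_mul_le_iff₀ hZ]
  exact hbound

end WeightedMean

section GaussianWeight

variable {E : Type*} [NormedAddCommGroup E] [InnerProductSpace ℝ E] {b s R : ℝ}

/-- The weight `w_t(x, u)` of the paper, with `b = β_t` and `s = s_t²`. -/
def gaussianWeight (b s : ℝ) (x u : E) : ℝ :=
  Real.exp (-‖x - b • u‖ ^ 2 / (2 * s))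

theorem gaussianWeight_pos (x u : E) : 0 < gaussianWeight b s x u := Real.exp_pos _

theorem continuous_gaussianWeight (x : E) : Continuous (gaussianWeight b s x) := by
  unfold gaussianWeight; fun_prop

theorem gaussianWeight_le_one (hs : 0 ≤ s) (x u : E) : gaussianWeight b s x u ≤ 1 := by
  rw [gaussianWeight, Real.exp_le_one_iff]
  exact div_nonpos_of_nonpos_of_nonneg (neg_nonpos.2 (sq_nonneg _)) (by positivity)

theorem exp_mul_gaussianWeight (hs : s ≠ 0) (x x' u : E) :
    Real.exp ((‖x'‖ ^ 2 - ‖x‖ ^ 2) / (2 * s)) * gaussianWeight b s x' u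
      = gaussianWeight b s x u * Real.exp (-(b * inner ℝ (x - x') u / s)) := by
  simp only [gaussianWeight, ← Real.exp_add, norm_sub_sq_real, real_inner_smul_right,
    norm_smul, inner_sub_left, mul_pow, Real.norm_eq_abs, sq_abs]
  congr 1
  field_simp
  ring

theorem abs_gaussianWeight_sub_le (hb : 0 ≤ b) (hs : 0 < s) {x x' u : E} (hu : ‖u‖ ≤ R)
    (hT : b * R * ‖x - x'‖ / s ≤ 1) :
    |gaussianWeight b s x u
        - Real.exp ((‖x'‖ ^ 2 - ‖x‖ ^ 2) / (2 * s)) * gaussianWeight b s x' u|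
      ≤ 2 * (b * R * ‖x - x'‖ / s) * gaussianWeight b s x u := by
  set θ := b * inner ℝ (x - x') u / s
  have hθ : |θ| ≤ b * R * ‖x - x'‖ / s :=
    calc |θ| = b * |inner ℝ (x - x') u| / s := by
          rw [abs_div, abs_mul, abs_of_nonneg hb, abs_of_pos hs]
      _ ≤ b * (‖x - x'‖ * R) / s := by
          gcongr
          exact (abs_real_inner_le_norm _ _).trans (by gcongr)
      _ = b * R * ‖x - x'‖ / s := by ring
  have hexp : |Real.exp (-θ) - 1| ≤ 2 * |θ| := by
    simpa only [abs_neg] using Real.abs_exp_sub_one_le (x := -θ) (by rw [abs_neg]; linarith)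
  rw [exp_mul_gaussianWeight hs.ne', ← mul_one_sub, abs_mul, abs_sub_comm,
    abs_of_nonneg (gaussianWeight_pos x u).le, mul_comm _ (gaussianWeight b s x u)]
  exact mul_le_mul_of_nonneg_left (hexp.trans (by linarith)) (gaussianWeight_pos x u).le

variable [MeasurableSpace E] [OpensMeasurableSpace E] {ν : Measure E}

theorem integral_gaussianWeight_pos [IsFiniteMeasure ν] [NeZero ν] (hs : 0 ≤ s) (x : E) :
    0 < ∫ u, gaussianWeight b s x u ∂ν :=
  integral_exp_pos <| Integrable.of_bound (continuous_gaussianWeight x).aestronglyMeasurable 1 <|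
    ae_of_all _ fun u => by
      rw [Real.norm_of_nonneg (Real.exp_pos _).le]; exact gaussianWeight_le_one hs x u

theorem integrable_gaussianWeight_smul [IsFiniteMeasure ν] [SecondCountableTopology E]
    (hs : 0 ≤ s) (hR : ∀ᵐ u ∂ν, ‖u‖ ≤ R) (x : E) :
    Integrable (fun u => gaussianWeight b s x u • u) ν := by
  refine Integrable.of_bound ?_ R ?_
  · exact ((continuous_gaussianWeight x).smul continuous_id).aestronglyMeasurable
  · filter_upwards [hR] with u hu
    rw [norm_smul, Real.norm_of_nonneg (gaussianWeight_pos x u).le]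
    exact (mul_le_of_le_one_left (norm_nonneg u) (gaussianWeight_le_one hs x u)).trans hu

variable [CompleteSpace E] [SecondCountableTopology E] [IsFiniteMeasure ν] [NeZero ν]

theorem norm_weightedMean_gaussianWeight_sub_le (hb : 0 ≤ b) (hs : 0 < s)
    (hR : ∀ᵐ u ∂ν, ‖u‖ ≤ R) (x x' : E) :
    ‖weightedMean ν (gaussianWeight b s x) - weightedMean ν (gaussianWeight b s x')‖
      ≤ 4 * R ^ 2 * b / s * ‖x - x'‖ := by
  have hZ (y : E) := integral_gaussianWeight_pos (ν := ν) (b := b) hs.le y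
  have hmean (y : E) : ‖weightedMean ν (gaussianWeight b s y)‖ ≤ R :=
    norm_weightedMean_le (ae_of_all _ fun u => (gaussianWeight_pos y u).le) (hZ y) hR
  have hR0 : 0 ≤ R := (norm_nonneg _).trans (hmean x)
  set T := b * R * ‖x - x'‖ / s
  rw [show 4 * R ^ 2 * b / s * ‖x - x'‖ = 2 * R * (2 * T) by ring]
  rcases le_or_gt T 1 with hT | hT
  · set c := Real.exp ((‖x'‖ ^ 2 - ‖x‖ ^ 2) / (2 * s))
    have hc : 0 < c := Real.exp_pos _
    rw [← weightedMean_const_mul (w := gaussianWeight b s x') hc.ne']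
    refine norm_weightedMean_sub_le (hZ x) ?_ ?_ (integrable_gaussianWeight_smul hs.le hR x) ?_
      hR ?_
    · rw [integral_const_mul]; exact mul_pos hc (hZ x')
    · exact ae_of_all _ fun u => mul_nonneg hc.le (gaussianWeight_pos x' u).le
    · simpa only [Pi.smul_def, smul_smul] using (integrable_gaussianWeight_smul hs.le hR x').smul c
    · filter_upwards [hR] with u hu
      exact abs_gaussianWeight_sub_le hb hs hu hT
  · calc _ ≤ ‖weightedMean ν (gaussianWeight b s x)‖
            + ‖weightedMean ν (gaussianWeight b s x')‖ := norm_sub_le _ _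
      _ ≤ 2 * R * (2 * T) := by nlinarith [hmean x, hmean x']

end GaussianWeight

theorem norm_le_sqrt_card_of_forall_abs_le_one {ι : Type*} [Fintype ι] {u : EuclideanSpace ℝ ι}
    (hu : ∀ i, |u i| ≤ 1) : ‖u‖ ≤ √(Fintype.card ι) := by
  rw [EuclideanSpace.norm_eq]
  gcongr
  calc ∑ i, ‖u i‖ ^ 2 ≤ ∑ _i : ι, (1 : ℝ) := by
        gcongr with i
        rw [Real.norm_eq_abs, sq_abs]
        exact (sq_le_one_iff_abs_le_one _).2 (hu i)
    _ = Fintype.card ι := by simp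

theorem norm_weightedMean_gaussianWeight_sub_le_of_abs_le_one {ι : Type*} [Fintype ι]
    {ν : Measure (EuclideanSpace ℝ ι)} [IsFiniteMeasure ν] [NeZero ν]
    (hν : ∀ᵐ u ∂ν, ∀ i, |u i| ≤ 1) {b s c : ℝ} (hb₀ : 0 ≤ b) (hb₁ : b ≤ 1) (hc : 0 < c)
    (hcs : c ≤ s) (x x' : EuclideanSpace ℝ ι) :
    ‖weightedMean ν (gaussianWeight b s x) - weightedMean ν (gaussianWeight b s x')‖
      ≤ 4 * Fintype.card ι / c * ‖x - x'‖ := by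
  have hR := hν.mono fun u hu => norm_le_sqrt_card_of_forall_abs_le_one hu
  refine (norm_weightedMean_gaussianWeight_sub_le hb₀ (hc.trans_le hcs) hR x x').trans ?_
  rw [Real.sq_sqrt (Nat.cast_nonneg _)]
  gcongr ?_ * _
  exact div_le_div₀ (by positivity) (mul_le_of_le_one_right (by positivity) hb₁) hc hcs

theorem norm_smul_add_smul_sub_le {E : Type*} [NormedAddCommGroup E] [NormedSpace ℝ E]
    (a c : ℝ) (u u' x x' : E) :
    ‖(a • u + c • x) - (a • u' + c • x')‖ ≤ |a| * ‖u - u'‖ + |c| * ‖x - x'‖ := by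
  rw [show (a • u + c • x) - (a • u' + c • x') = a • (u - u') + c • (x - x') by module,
    ← Real.norm_eq_abs, ← Real.norm_eq_abs, ← norm_smul, ← norm_smul]
  exact norm_add_le _ _

theorem abs_div_le_div_of_abs_le {p q s c : ℝ} (hp : |p| ≤ q) (hc : 0 < c) (hcs : c ≤ s) :
    |p / s| ≤ q / c := by
  rw [abs_div, abs_of_pos (hc.trans_le hcs)]
  exact div_le_div₀ ((abs_nonneg p).trans hp) hp hc hcs

theorem abs_mul_mul_sub_mul_le {a b a' b' : ℝ} (ha : |a| ≤ 1) (hb : |b| ≤ 1) :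
    |a * (a * b' - a' * b)| ≤ |a * a'| + |b'| := by
  calc |a * (a * b' - a' * b)| = |a ^ 2 * b' - (a * a') * b| := by ring_nf
    _ ≤ |a ^ 2 * b'| + |(a * a') * b| := abs_sub _ _
    _ ≤ |b'| + |a * a'| := by
        rw [abs_mul, abs_mul (a * a'), abs_pow]
        gcongr
        · exact mul_le_of_le_one_left (abs_nonneg _) (pow_le_one₀ (abs_nonneg a) ha)
        · exact mul_le_of_le_one_right (abs_nonneg _) hb
    _ = |a * a'| + |b'| := add_comm _ _

theorem abs_add_mul_mul_le {p k b b' : ℝ} (hk : 0 ≤ k) (hb : |b| ≤ 1) :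
    |p + k * b * b'| ≤ |p| + k * |b'| := by
  refine (abs_add_le _ _).trans (add_le_add_right ?_ _)
  rw [abs_mul, abs_mul, abs_of_nonneg hk, mul_assoc]
  exact mul_le_mul_of_nonneg_left (mul_le_of_le_one_left (abs_nonneg _) hb) hk

theorem velocity_uniform_lipschitz_general
    {d : ℕ} (σ : ℝ)
    (α β α' β' : ℝ → ℝ)
    (hrange : ∀ t ∈ Set.Icc (0 : ℝ) 1,
      α t ∈ Set.Icc (0 : ℝ) 1 ∧ β t ∈ Set.Icc (0 : ℝ) 1)
    (Cα Cβ clow : ℝ) (hclow : 0 < clow)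
    (hCα : ∀ t ∈ Set.Ico (0 : ℝ) 1, |α t * α' t| ≤ Cα)
    (hCβ : ∀ t ∈ Set.Ico (0 : ℝ) 1, |β' t| ≤ Cβ)
    (hlow : ∀ t ∈ Set.Icc (0 : ℝ) 1, clow ≤ (α t) ^ 2 + σ ^ 2 * (β t) ^ 2)
    (ν : Measure (EuclideanSpace ℝ (Fin d))) [IsProbabilityMeasure ν]
    (hνsupp : ∀ᵐ u ∂ν, ∀ i, u i ∈ Set.Icc (0 : ℝ) 1)
    (s2 : ℝ → ℝ) (hs2 : ∀ t, s2 t = (α t) ^ 2 + σ ^ 2 * (β t) ^ 2)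
    (w : ℝ → EuclideanSpace ℝ (Fin d) → EuclideanSpace ℝ (Fin d) → ℝ)
    (hw : ∀ t x u, w t x u = Real.exp (-‖x - β t • u‖ ^ 2 / (2 * s2 t)))
    (ubar : ℝ → EuclideanSpace ℝ (Fin d) → EuclideanSpace ℝ (Fin d))
    (hubar : ∀ t x, ubar t x = (∫ u, w t x u ∂ν)⁻¹ • ∫ u, w t x u • u ∂ν)
    (c₁ c₂ : ℝ → ℝ)
    (hc₁ : ∀ t, c₁ t = α t * (α t * β' t - α' t * β t) / s2 t)
    (hc₂ : ∀ t, c₂ t = (α t * α' t + σ ^ 2 * β t * β' t) / s2 t)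
    (bstar : ℝ → EuclideanSpace ℝ (Fin d) → EuclideanSpace ℝ (Fin d))
    (hbstar : ∀ t x, bstar t x = c₁ t • ubar t x + c₂ t • x) :
    ∃ G > 0, ∀ t ∈ Set.Ico (0 : ℝ) 1,
      ∀ x x' : EuclideanSpace ℝ (Fin d),
        ‖bstar t x - bstar t x'‖ ≤ G * ‖x - x'‖ := by
  have hCα0 : 0 ≤ Cα := (abs_nonneg _).trans (hCα 0 ⟨le_rfl, one_pos⟩)
  have hCβ0 : 0 ≤ Cβ := (abs_nonneg _).trans (hCβ 0 ⟨le_rfl, one_pos⟩)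
  refine ⟨(Cα + Cβ) / clow * (4 * d / clow) + (Cα + σ ^ 2 * Cβ) / clow + 1, by positivity, ?_⟩
  intro t ht x x'
  have ht' : t ∈ Set.Icc (0 : ℝ) 1 := Set.Ico_subset_Icc_self ht
  have hunit {a : ℝ} (ha : a ∈ Set.Icc (0 : ℝ) 1) : |a| ≤ 1 := abs_le.2 ⟨by linarith [ha.1], ha.2⟩
  obtain ⟨hαt, hβt⟩ := hrange t ht'
  have hs : clow ≤ s2 t := hs2 t ▸ hlow t ht'
  have hub : ‖ubar t x - ubar t x'‖ ≤ 4 * d / clow * ‖x - x'‖ := by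
    have h := norm_weightedMean_gaussianWeight_sub_le_of_abs_le_one
      (hνsupp.mono fun u hu i => hunit (hu i)) hβt.1 hβt.2 hclow hs x x'
    rw [Fintype.card_fin] at h
    rwa [hubar, hubar, show w t = gaussianWeight (β t) (s2 t) from funext₂ (hw t)]
  have hc1 : |c₁ t| ≤ (Cα + Cβ) / clow := hc₁ t ▸ abs_div_le_div_of_abs_le
    ((abs_mul_mul_sub_mul_le (hunit hαt) (hunit hβt)).trans (add_le_add (hCα t ht) (hCβ t ht)))
    hclow hs
  have hc2 : |c₂ t| ≤ (Cα + σ ^ 2 * Cβ) / clow := hc₂ t ▸ abs_div_le_div_of_abs_le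
    ((abs_add_mul_mul_le (sq_nonneg σ) (hunit hβt)).trans
      (add_le_add (hCα t ht) (mul_le_mul_of_nonneg_left (hCβ t ht) (sq_nonneg σ)))) hclow hs
  calc ‖bstar t x - bstar t x'‖ ≤ |c₁ t| * ‖ubar t x - ubar t x'‖ + |c₂ t| * ‖x - x'‖ := by
        rw [hbstar, hbstar]; exact norm_smul_add_smul_sub_le _ _ _ _ _ _
    _ ≤ (Cα + Cβ) / clow * (4 * d / clow * ‖x - x'‖) + (Cα + σ ^ 2 * Cβ) / clow * ‖x - x'‖ := by
        gcongr
    _ ≤ _ := by nlinarith [norm_nonneg (x - x')]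

/-- Corollary III.8 of the paper, uniform spatial Lipschitz continuity
of the velocity. Under Condition 3.1 on the interpolation coefficients `α, β` (with
derivative data `α', β'`), the bounds `|α_t α̇_t| ≤ Cα`, `|β̇_t| ≤ Cβ` on `[0,1)` and the
lower bound `0 < clow ≤ α_t² + σ²β_t²` on `[0,1]`, and with `ν` a probability measure
supported in the unit cube, there is a constant `G > 0` such that for every `t ∈ [0,1)`
and all `x, x'`, `‖b*(t,x) - b*(t,x')‖₂ ≤ G ‖x - x'‖₂`. -/
theorem velocity_uniform_lipschitz
    {d : ℕ} (hd : 1 ≤ d) (σ : ℝ) (hσ : 0 < σ)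
    (α β α' β' : ℝ → ℝ)
    (hαcont : ContinuousOn α (Set.Icc 0 1)) (hβcont : ContinuousOn β (Set.Icc 0 1))
    (hαderiv : ∀ t ∈ Set.Ico (0 : ℝ) 1, HasDerivWithinAt α (α' t) (Set.Icc 0 1) t)
    (hβderiv : ∀ t ∈ Set.Ico (0 : ℝ) 1, HasDerivWithinAt β (β' t) (Set.Icc 0 1) t)
    (hαanti : AntitoneOn α (Set.Icc 0 1)) (hβmono : MonotoneOn β (Set.Icc 0 1))
    (hα0 : α 0 = 1) (hα1 : α 1 = 0) (hβ0 : β 0 = 0) (hβ1 : β 1 = 1)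
    (hrange : ∀ t ∈ Set.Icc (0 : ℝ) 1,
      α t ∈ Set.Icc (0 : ℝ) 1 ∧ β t ∈ Set.Icc (0 : ℝ) 1)
    (hposdef : ∀ t ∈ Set.Icc (0 : ℝ) 1, 0 < (α t) ^ 2 + (β t) ^ 2)
    (Cα Cβ clow : ℝ) (hclow : 0 < clow)
    (hCα : ∀ t ∈ Set.Ico (0 : ℝ) 1, |α t * α' t| ≤ Cα)
    (hCβ : ∀ t ∈ Set.Ico (0 : ℝ) 1, |β' t| ≤ Cβ)
    (hlow : ∀ t ∈ Set.Icc (0 : ℝ) 1, clow ≤ (α t) ^ 2 + σ ^ 2 * (β t) ^ 2)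
    (ν : Measure (EuclideanSpace ℝ (Fin d))) [IsProbabilityMeasure ν]
    (hνsupp : ∀ᵐ u ∂ν, ∀ i, u i ∈ Set.Icc (0 : ℝ) 1)
    (s2 : ℝ → ℝ) (hs2 : ∀ t, s2 t = (α t) ^ 2 + σ ^ 2 * (β t) ^ 2)
    (w : ℝ → EuclideanSpace ℝ (Fin d) → EuclideanSpace ℝ (Fin d) → ℝ)
    (hw : ∀ t x u, w t x u = Real.exp (-‖x - β t • u‖ ^ 2 / (2 * s2 t)))
    (ubar : ℝ → EuclideanSpace ℝ (Fin d) → EuclideanSpace ℝ (Fin d))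
    (hubar : ∀ t x, ubar t x = (∫ u, w t x u ∂ν)⁻¹ • ∫ u, w t x u • u ∂ν)
    (c₁ c₂ : ℝ → ℝ)
    (hc₁ : ∀ t, c₁ t = α t * (α t * β' t - α' t * β t) / s2 t)
    (hc₂ : ∀ t, c₂ t = (α t * α' t + σ ^ 2 * β t * β' t) / s2 t)
    (bstar : ℝ → EuclideanSpace ℝ (Fin d) → EuclideanSpace ℝ (Fin d))
    (hbstar : ∀ t x, bstar t x = c₁ t • ubar t x + c₂ t • x) :
    ∃ G > 0, ∀ t ∈ Set.Ico (0 : ℝ) 1,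
      ∀ x x' : EuclideanSpace ℝ (Fin d),
        ‖bstar t x - bstar t x'‖ ≤ G * ‖x - x'‖ :=
  velocity_uniform_lipschitz_general σ α β α' β' hrange Cα Cβ clow hclow hCα hCβ hlow ν hνsupp s2
    hs2 w hw ubar hubar c₁ c₂ hc₁ hc₂ bstar hbstar
end
end

section
/- Let p be a positive integer, N₁, …, N_p positive integers, and for each multi-index m = (m₁, …, m_p) with 0 ≤ m_k ≤ N_k define φ_m(x) := Π_{k=1}^{p} ψ(3N_k·(x_k − m_k/N_k)), where ψ is the trapezoid function. Let u* : [0,1]^p → ℝ satisfy |u*(x) − u*(y)| ≤ Σ_{k=1}^{p} L_k·|x_k − y_k| for all x, y ∈ [0,1]^p, and define u(x) := Σ_m φ_m(x)·u*(m₁/N₁, …, m_p/N_p), the sum running over all such multi-indices. Then sup_{x ∈ [0,1]^p} |u(x) − u*(x)| ≤ 2^p · Σ_{k=1}^{p} L_k/N_k. -/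
open Finset
set_option maxHeartbeats 1000000 in

lemma trap_onedim (N : ℕ) (hN : 0 < N) (x : ℝ) (hx0 : 0 ≤ x) (hx1 : x ≤ 1) :
    ∑ m : Fin (N+1), min 1 (max 0 (2 - |3*(N:ℝ)*(x - ((m:ℕ):ℝ)/(N:ℝ))|)) = 1 := by
  have hNR : (0:ℝ) < N := by exact_mod_cast hN
  have h0 : (0:ℤ) ≤ ⌊x*(N:ℝ)⌋ := Int.floor_nonneg.mpr (by positivity)
  have hcast : ((⌊x*(N:ℝ)⌋.toNat : ℕ) : ℝ) = ((⌊x*(N:ℝ)⌋ : ℤ) : ℝ) := by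
    exact_mod_cast Int.toNat_of_nonneg h0
  have hfl : ((⌊x*(N:ℝ)⌋.toNat : ℕ) : ℝ) ≤ x*N := by
    rw [hcast]; exact Int.floor_le _
  have hfl2 : x*N < ((⌊x*(N:ℝ)⌋.toNat : ℕ) : ℝ) + 1 := by
    rw [hcast]; exact Int.lt_floor_add_one _
  obtain ⟨j, hjN, hj1, hj2⟩ : ∃ j : ℕ, j + 1 ≤ N ∧ ((j:ℝ))/N ≤ x ∧ x ≤ ((j:ℝ)+1)/N := by
    rcases le_total (N-1) (⌊x*N⌋.toNat) with h | h
    · refine ⟨N-1, by omega, ?_, ?_⟩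
      · have h1 : ((N-1:ℕ):ℝ) ≤ ((⌊x*N⌋.toNat : ℕ) : ℝ) := by exact_mod_cast h
        rw [div_le_iff₀ hNR]; linarith
      · have hc : ((N-1:ℕ):ℝ) + 1 = (N:ℝ) := by
          have h1 : (1:ℕ) ≤ N := hN
          push_cast [Nat.cast_sub h1]; ring
        rw [hc, div_self hNR.ne']; exact hx1
    · refine ⟨⌊x*N⌋.toNat, by omega, ?_, ?_⟩
      · rw [div_le_iff₀ hNR]; exact hfl
      · rw [le_div_iff₀ hNR]; linarith
  set f : Fin (N+1) → ℝ := fun m => min 1 (max 0 (2 - |3*(N:ℝ)*(x - ((m:ℕ):ℝ)/(N:ℝ))|)) with hf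
  have ha : j < N + 1 := by omega
  have hb : j + 1 < N + 1 := by omega
  set a : Fin (N+1) := ⟨j, ha⟩
  set b : Fin (N+1) := ⟨j+1, hb⟩
  have hab : a ≠ b := by simp [a, b, Fin.ext_iff]
  have hxj : (j:ℝ) ≤ x * N := by rwa [div_le_iff₀ hNR] at hj1
  have hxj' : x * N ≤ (j:ℝ) + 1 := by rwa [le_div_iff₀ hNR] at hj2
  have hzero : ∀ m ∈ (univ : Finset (Fin (N+1))), m ∉ ({a, b} : Finset (Fin (N+1))) → f m = 0 := by
    intro m _ hm
    simp only [mem_insert, mem_singleton] at hm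
    push_neg at hm
    obtain ⟨hma, hmb⟩ := hm
    have hmj : (m:ℕ) ≠ j := fun h => hma (Fin.ext h)
    have hmj1 : (m:ℕ) ≠ j + 1 := fun h => hmb (Fin.ext h)
    have h2 : (2:ℝ) ≤ |3*(N:ℝ)*(x - ((m:ℕ):ℝ)/(N:ℝ))| := by
      have hNm : (N:ℝ) * (((m:ℕ):ℝ)/(N:ℝ)) = ((m:ℕ):ℝ) := by field_simp
      rcases lt_or_gt_of_ne hmj with hlt | hgt
      · -- m < j : x - m/N ≥ 1/N
        have : ((m:ℕ):ℝ) + 1 ≤ (j:ℝ) := by exact_mod_cast hlt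
        rw [le_abs]; left; nlinarith
      · -- m ≥ j+2
        have hge : j + 2 ≤ (m:ℕ) := by omega
        have : (j:ℝ) + 2 ≤ ((m:ℕ):ℝ) := by exact_mod_cast hge
        rw [le_abs]; right; nlinarith
    rw [hf]
    simp only []
    have : max 0 (2 - |3*(N:ℝ)*(x - ((m:ℕ):ℝ)/(N:ℝ))|) = 0 := max_eq_left (by linarith)
    rw [this, min_eq_right zero_le_one]
  have hsum : ∑ m : Fin (N+1), f m = f a + f b := by
    rw [← Finset.sum_subset (Finset.subset_univ {a, b}) hzero, Finset.sum_pair hab]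
  rw [hsum]
  set s : ℝ := 3*(N:ℝ)*(x - (j:ℝ)/(N:ℝ)) with hs
  have hs0 : 0 ≤ s := by rw [hs]; nlinarith
  have hs3 : s ≤ 3 := by rw [hs]; nlinarith [mul_div_cancel₀ (j:ℝ) hNR.ne']
  have hfa : f a = min 1 (max 0 (2 - |s|)) := by simp [hf, a, hs]
  have hfb : f b = min 1 (max 0 (2 - |s - 3|)) := by
    have : 3*(N:ℝ)*(x - ((j:ℝ)+1)/(N:ℝ)) = s - 3 := by
      rw [hs]; field_simp; ring
    simp only [hf, b]
    rw [show (((j+1:ℕ):ℝ)) = (j:ℝ)+1 by push_cast; ring, this]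
  rw [hfa, hfb, abs_of_nonneg hs0, abs_of_nonpos (by linarith)]
  rcases le_total s 1 with h | h <;> rcases le_total s 2 with h' | h' <;>
    simp [min_def, max_def] <;> split_ifs <;> linarith

noncomputable section

/-- Lemma J.6 of the paper, approximation by a partition of unity.
Let `ψ` be the trapezoid function, `φ_m(x) = ∏ₖ ψ(3 Nₖ (xₖ - mₖ/Nₖ))` for multi-indices
`m` with `0 ≤ mₖ ≤ Nₖ`, and let `u*` satisfy the coordinatewise Lipschitz bound
`|u*(x) - u*(y)| ≤ ∑ₖ Lₖ |xₖ - yₖ|` on `[0,1]^p`. Then the piecewise-linear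
interpolant `u(x) = ∑_m φ_m(x) u*(m₁/N₁, …, m_p/N_p)` satisfies
`sup_{x ∈ [0,1]^p} |u(x) - u*(x)| ≤ 2^p ∑ₖ Lₖ/Nₖ`. -/
theorem partition_of_unity_approximation
    (p : ℕ) (hp : 0 < p)
    (N : Fin p → ℕ) (hN : ∀ k, 0 < N k)
    (ψ : ℝ → ℝ) (hψ : ∀ z : ℝ, ψ z = min 1 (max 0 (2 - |z|)))
    (L : Fin p → ℝ)
    (ustar : (Fin p → ℝ) → ℝ)
    (hlip : ∀ x y : Fin p → ℝ, (∀ k, x k ∈ Set.Icc (0 : ℝ) 1) →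
      (∀ k, y k ∈ Set.Icc (0 : ℝ) 1) →
      |ustar x - ustar y| ≤ ∑ k, L k * |x k - y k|)
    (u : (Fin p → ℝ) → ℝ)
    (hu : ∀ x, u x =
      ∑ m : (k : Fin p) → Fin (N k + 1),
        (∏ k, ψ (3 * (N k : ℝ) * (x k - ((m k : ℕ) : ℝ) / (N k : ℝ)))) *
          ustar (fun k => ((m k : ℕ) : ℝ) / (N k : ℝ))) :
    ∀ x : Fin p → ℝ, (∀ k, x k ∈ Set.Icc (0 : ℝ) 1) →
      |u x - ustar x| ≤ 2 ^ p * ∑ k, L k / (N k : ℝ) := by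
  intro x hx
  have hNR : ∀ k, (0:ℝ) < N k := fun k => by exact_mod_cast hN k
  -- ψ basic facts
  have hψ0 : ∀ z, 0 ≤ ψ z := fun z => by
    rw [hψ]; exact le_min zero_le_one (le_max_left _ _)
  have hψz : ∀ z : ℝ, 2 ≤ |z| → ψ z = 0 := fun z hz => by
    rw [hψ, max_eq_left (by linarith), min_eq_right zero_le_one]
  -- L is nonnegative
  have hL : ∀ k, 0 ≤ L k := by
    intro k
    have h := hlip (fun _ => 0) (fun i => if i = k then 1 else 0)
      (fun i => ⟨le_refl 0, zero_le_one⟩)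
      (fun i => by by_cases h : i = k <;> simp [h])
    have heq : ∀ i, L i * |(0:ℝ) - (if i = k then (1:ℝ) else 0)| =
        if i = k then L i else 0 := by
      intro i; by_cases h : i = k <;> simp [h]
    rw [Finset.sum_congr rfl (fun i _ => heq i), Finset.sum_ite_eq' univ k L,
      if_pos (mem_univ k)] at h
    exact le_trans (abs_nonneg _) h
  -- bound B
  set B : ℝ := ∑ k, L k / (N k : ℝ) with hB
  have hB0 : 0 ≤ B := Finset.sum_nonneg fun k _ => div_nonneg (hL k) (hNR k).le
  -- notation
  set φ : ((k : Fin p) → Fin (N k + 1)) → ℝ :=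
    fun m => ∏ k, ψ (3 * (N k : ℝ) * (x k - ((m k : ℕ) : ℝ) / (N k : ℝ))) with hφ
  have hφ0 : ∀ m, 0 ≤ φ m := fun m => Finset.prod_nonneg fun k _ => hψ0 _
  -- partition of unity
  have hpart : ∑ m : (k : Fin p) → Fin (N k + 1), φ m = 1 := by
    simp only [hφ]
    rw [← Fintype.piFinset_univ,
      ← Finset.prod_univ_sum (fun k : Fin p => (univ : Finset (Fin (N k + 1))))
        (fun k j => ψ (3 * (N k : ℝ) * (x k - ((j : ℕ) : ℝ) / (N k : ℝ))))]
    have h1 : ∀ k : Fin p,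
        ∑ j : Fin (N k + 1), ψ (3 * (N k : ℝ) * (x k - ((j : ℕ) : ℝ) / (N k : ℝ))) = 1 := by
      intro k
      have := trap_onedim (N k) (hN k) (x k) (hx k).1 (hx k).2
      simpa [hψ] using this
    rw [Finset.prod_congr rfl (fun k _ => h1 k), Finset.prod_const_one]
  -- per-index distance bound
  have hdist : ∀ m : (k : Fin p) → Fin (N k + 1),
      φ m * |ustar (fun k => ((m k : ℕ) : ℝ) / (N k : ℝ)) - ustar x| ≤ φ m * B := by
    intro m
    rcases eq_or_lt_of_le (hφ0 m) with h | h
    · rw [← h, zero_mul, zero_mul]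
    · refine mul_le_mul_of_nonneg_left ?_ (hφ0 m)
      have hpm : ∀ k, ((m k : ℕ) : ℝ) / (N k : ℝ) ∈ Set.Icc (0:ℝ) 1 := by
        intro k
        constructor
        · positivity
        · rw [div_le_one (hNR k)]
          exact_mod_cast Nat.le_of_lt_succ (m k).isLt
      have hclose : ∀ k, |((m k : ℕ) : ℝ) / (N k : ℝ) - x k| ≤ 1 / (N k : ℝ) := by
        intro k
        by_contra hcon
        push_neg at hcon
        have h2 : 2 ≤ |3 * (N k : ℝ) * (x k - ((m k : ℕ) : ℝ) / (N k : ℝ))| := by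
          rw [abs_mul, abs_of_pos (by nlinarith [hNR k] : (0:ℝ) < 3 * (N k : ℝ)),
            abs_sub_comm]
          have := (div_lt_iff₀ (hNR k)).mp (lt_of_le_of_lt (le_refl _) hcon)
          nlinarith [abs_nonneg (((m k : ℕ) : ℝ) / (N k : ℝ) - x k),
            (div_lt_iff₀ (hNR k)).mp hcon]
        have : φ m = 0 := Finset.prod_eq_zero (mem_univ k) (hψz _ h2)
        rw [this] at h; exact lt_irrefl _ h
      calc |ustar (fun k => ((m k : ℕ) : ℝ) / (N k : ℝ)) - ustar x|
          ≤ ∑ k, L k * |((m k : ℕ) : ℝ) / (N k : ℝ) - x k| := hlip _ x hpm hx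
        _ ≤ ∑ k, L k / (N k : ℝ) := by
            refine Finset.sum_le_sum fun k _ => ?_
            rw [div_eq_mul_one_div (L k) _]
            exact mul_le_mul_of_nonneg_left (hclose k) (hL k)
        _ = B := rfl
  -- main chain
  have key : |u x - ustar x| ≤ B := by
    rw [hu]
    have hrw : (∑ m : (k : Fin p) → Fin (N k + 1),
        φ m * ustar (fun k => ((m k : ℕ) : ℝ) / (N k : ℝ))) - ustar x =
        ∑ m : (k : Fin p) → Fin (N k + 1),
          φ m * (ustar (fun k => ((m k : ℕ) : ℝ) / (N k : ℝ)) - ustar x) := by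
      rw [Finset.sum_congr rfl (fun m _ => mul_sub (φ m) _ _), Finset.sum_sub_distrib,
        ← Finset.sum_mul, hpart, one_mul]
    calc |(∑ m : (k : Fin p) → Fin (N k + 1),
          φ m * ustar (fun k => ((m k : ℕ) : ℝ) / (N k : ℝ))) - ustar x|
        = |∑ m : (k : Fin p) → Fin (N k + 1),
            φ m * (ustar (fun k => ((m k : ℕ) : ℝ) / (N k : ℝ)) - ustar x)| := by rw [hrw]
      _ ≤ ∑ m : (k : Fin p) → Fin (N k + 1),
            |φ m * (ustar (fun k => ((m k : ℕ) : ℝ) / (N k : ℝ)) - ustar x)| :=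
          Finset.abs_sum_le_sum_abs _ _
      _ = ∑ m : (k : Fin p) → Fin (N k + 1),
            φ m * |ustar (fun k => ((m k : ℕ) : ℝ) / (N k : ℝ)) - ustar x| := by
          refine Finset.sum_congr rfl fun m _ => ?_
          rw [abs_mul, abs_of_nonneg (hφ0 m)]
      _ ≤ ∑ m : (k : Fin p) → Fin (N k + 1), φ m * B :=
          Finset.sum_le_sum fun m _ => hdist m
      _ = B := by rw [← Finset.sum_mul, hpart, one_mul]
  have h2p : (1:ℝ) ≤ 2 ^ p := by exact_mod_cast Nat.one_le_two_pow
  calc |u x - ustar x| ≤ B := key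
    _ ≤ 2 ^ p * B := by nlinarith
end
end

section
/- For every positive integer N and every x ∈ [0,1], Σ_{m=0}^{N} ψ(3N·(x − m/N)) = 1; that is, the scaled and shifted trapezoid functions form a partition of unity on the unit interval. -/
noncomputable section

set_option maxHeartbeats 1000000 in
lemma trapezoid_relu (z : ℝ) :
    min 1 (max 0 (2 - |z|)) =
      (max 0 (z + 2) - max 0 (z + 1)) - (max 0 (z - 1) - max 0 (z - 2)) := by
  rcases abs_cases z with ⟨h1, h2⟩ | ⟨h1, h2⟩ <;> rw [h1] <;>
    simp only [min_def, max_def] <;> split_ifs <;> linarith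

/-- partition-of-unity identity, equation (eq:proof:approx:1) of the
paper in its one-dimensional form. For the trapezoid function `ψ`, every positive
integer `N` and every `x ∈ [0,1]`, `∑_{m=0}^{N} ψ(3N(x - m/N)) = 1`. -/
theorem trapezoid_partition_of_unity
    (ψ : ℝ → ℝ) (hψ : ∀ z : ℝ, ψ z = min 1 (max 0 (2 - |z|)))
    (N : ℕ) (hN : 0 < N)
    (x : ℝ) (hx : x ∈ Set.Icc (0 : ℝ) 1) :
    ∑ m ∈ Finset.range (N + 1), ψ (3 * (N : ℝ) * (x - (m : ℝ) / (N : ℝ))) = 1 := by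
  obtain ⟨hx0, hx1⟩ := hx
  have hNpos : (0 : ℝ) < N := by exact_mod_cast hN
  set y : ℝ := 3 * N * x with hy
  have hy0 : 0 ≤ y := by positivity
  have hyN : y ≤ 3 * N := by nlinarith
  set f : ℕ → ℝ := fun m => max 0 (y - 3 * m + 2) - max 0 (y - 3 * m + 1) with hf
  have hterm : ∀ m : ℕ, ψ (3 * (N : ℝ) * (x - (m : ℝ) / (N : ℝ))) = f m - f (m + 1) := by
    intro m
    have harg : 3 * (N : ℝ) * (x - (m : ℝ) / (N : ℝ)) = y - 3 * m := by
      field_simp [hy]; ring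
    rw [harg, hψ, trapezoid_relu]
    simp only [hf]
    push_cast
    ring_nf
  rw [Finset.sum_congr rfl (fun m _ => hterm m), Finset.sum_range_sub' f]
  have h0 : f 0 = 1 := by
    simp only [hf]
    rw [max_eq_right (by push_cast; linarith), max_eq_right (by push_cast; linarith)]
    push_cast; ring
  have h1 : f (N + 1) = 0 := by
    simp only [hf]
    rw [max_eq_left (by push_cast; linarith), max_eq_left (by push_cast; linarith)]
    ring
  rw [h0, h1]; ring
end
end

section
/- Let n ≥ 1 and N ≥ 1 be integers, B > 0, and let ξ₁, …, ξ_n be independent Rademacher random variables (each uniform on {−1, +1}). Let a⁽¹⁾, …, a⁽ᴺ⁾ be fixed vectors in ℝⁿ with entries a⁽ʲ⁾ᵢ ∈ [0, 4B²] for all i, j. Then E[ max_{1 ≤ j ≤ N} ( (3/n)·Σ_{i=1}^{n} ξᵢ·a⁽ʲ⁾ᵢ − (1/(4B²n))·Σ_{i=1}^{n} (a⁽ʲ⁾ᵢ)² ) ] ≤ 18B²·(log N + 1)/n. -/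
/-!
Each weighted Rademacher sum `S_j = ∑ᵢ ξᵢ a⁽ʲ⁾ᵢ` is sub-Gaussian with variance proxy
`∑ᵢ (a⁽ʲ⁾ᵢ)²` (Hoeffding's lemma and independence), so `E exp (t X) ≤ exp (c t² / 2)` for
`X = (3/n) S_j` and `c = (9/n²) ∑ᵢ (a⁽ʲ⁾ᵢ)²`. At `t = n / (18B²)` the offset
`(1/(4B²n)) ∑ᵢ (a⁽ʲ⁾ᵢ)²` is exactly `c t / 2`, hence `E exp (t Z_j) ≤ 1` for each `j`, and
bounding the maximum by the soft-max `t⁻¹ log ∑_j exp (t Z_j)` gives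
`E max_j Z_j ≤ log N / t = 18B² log N / n`.
-/

open MeasureTheory ProbabilityTheory Real
open scoped NNReal

section Rademacher

variable {Ω : Type*} [MeasurableSpace Ω] {μ : Measure Ω} [IsProbabilityMeasure μ] {X : Ω → ℝ}

lemma integral_eq_zero_of_rademacher (hX : Measurable X) (hval : ∀ ω, X ω = 1 ∨ X ω = -1)
    (hsym : μ {ω | X ω = 1} = 1 / 2) : μ[X] = 0 := by
  set A := {ω | X ω = 1}
  have hA : MeasurableSet A := hX (measurableSet_singleton 1)
  have hX_eq : X = fun ω => 2 * A.indicator (fun _ => 1) ω - 1 := by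
    funext ω
    rcases hval ω with h | h <;> simp [A, Set.indicator_apply, h] <;> norm_num
  rw [hX_eq, integral_sub (((integrable_const 1).indicator hA).const_mul 2) (integrable_const 1),
    integral_const_mul, integral_indicator_const _ hA]
  simp [Measure.real, hsym]

lemma hasSubgaussianMGF_one_of_rademacher (hX : Measurable X) (hval : ∀ ω, X ω = 1 ∨ X ω = -1)
    (hsym : μ {ω | X ω = 1} = 1 / 2) : HasSubgaussianMGF X 1 μ := by
  have hIcc : ∀ᵐ ω ∂μ, X ω ∈ Set.Icc (-1 : ℝ) 1 := ae_of_all _ fun ω => by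
    rcases hval ω with h | h <;> simp [h]
  convert hasSubgaussianMGF_of_mem_Icc_of_integral_eq_zero hX.aemeasurable hIcc
    (integral_eq_zero_of_rademacher hX hval hsym)
  ext
  norm_num

end Rademacher

namespace ProbabilityTheory.HasSubgaussianMGF

variable {Ω : Type*} [MeasurableSpace Ω] {μ : Measure Ω}

lemma sum_mul_of_iIndepFun {ι : Type*} {ξ : ι → Ω → ℝ} (hindep : iIndepFun ξ μ) {c : ι → ℝ≥0}
    {s : Finset ι} (hξ : ∀ i ∈ s, HasSubgaussianMGF (ξ i) (c i) μ) (a : ι → ℝ) :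
    HasSubgaussianMGF (fun ω => ∑ i ∈ s, ξ i ω * a i)
      (∑ i ∈ s, ‖a i‖₊ ^ 2 * c i) μ := by
  have hindep' : iIndepFun (fun i ω => a i * ξ i ω) μ :=
    hindep.comp (fun i x => a i * x) fun i => measurable_const_mul (a i)
  convert sum_of_iIndepFun hindep' fun i hi => (hξ i hi).const_mul (a i) using 3 with ω i
  · exact mul_comm _ _
  · ext
    rw [NNReal.coe_mul, NNReal.coe_pow, coe_nnnorm, norm_eq_abs, sq_abs]
    rfl

lemma integrable_exp_mul_sub {X : Ω → ℝ} {c : ℝ≥0} (h : HasSubgaussianMGF X c μ) (t k : ℝ) :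
    Integrable (fun ω => exp (t * (X ω - k))) μ := by
  simpa only [mul_sub, exp_sub] using (h.integrable_exp_mul t).div_const (exp (t * k))

lemma mgf_sub_le_one {X : Ω → ℝ} {c : ℝ≥0} (h : HasSubgaussianMGF X c μ) (t : ℝ) :
    mgf (fun ω => X ω - c * t / 2) μ t ≤ 1 := by
  simp only [sub_eq_add_neg, mgf_add_const]
  calc mgf X μ t * exp (t * -(c * t / 2)) ≤ exp (c * t ^ 2 / 2) * exp (t * -(c * t / 2)) := by
        gcongr; exact h.mgf_le t
    _ = 1 := by rw [← exp_add]; ring_nf; exact exp_zero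

end ProbabilityTheory.HasSubgaussianMGF

lemma le_log_sum_exp {ι : Type*} [Fintype ι] (z : ι → ℝ) (j : ι) : z j ≤ log (∑ k, exp (z k)) :=
  calc z j = log (exp (z j)) := (log_exp _).symm
    _ ≤ log (∑ k, exp (z k)) := log_le_log (exp_pos _)
      (Finset.single_le_sum (fun k _ => (exp_pos (z k)).le) (Finset.mem_univ j))

lemma log_le_div_add_log_sub_one {x y : ℝ} (hx : 0 < x) (hy : 0 < y) :
    log x ≤ x / y + log y - 1 := by
  have := log_le_sub_one_of_pos (div_pos hx hy)
  rw [log_div hx.ne' hy.ne'] at this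
  linarith

section MaximalInequality

variable {Ω : Type*} [MeasurableSpace Ω] {μ : Measure Ω} [IsProbabilityMeasure μ]
  {ι : Type*} [Fintype ι] [Nonempty ι]

/-- Pointwise `t Z_j ≤ log G` with `G = ∑_k exp (t Z_k)`, and `log G ≤ G / N + log N - 1` takes
the place of Jensen's inequality, so that only `E G ≤ N` is needed. -/
lemma integral_iSup_le_log_card_div {Z : ι → Ω → ℝ} {t : ℝ} (ht : 0 < t)
    (hint : ∀ j, Integrable (fun ω => exp (t * Z j ω)) μ) (hmgf : ∀ j, mgf (Z j) μ t ≤ 1) :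
    ∫ ω, ⨆ j, Z j ω ∂μ ≤ log (Fintype.card ι) / t := by
  set N : ℝ := (Fintype.card ι : ℝ)
  have hN : 0 < N := Nat.cast_pos.2 Fintype.card_pos
  set G : Ω → ℝ := fun ω => ∑ j, exp (t * Z j ω)
  have hG_int : Integrable G μ := integrable_finsetSum _ fun j _ => hint j
  have hG_le : ∫ ω, G ω ∂μ ≤ N := by
    rw [integral_finsetSum _ fun j _ => hint j]
    calc ∑ j, mgf (Z j) μ t ≤ ∑ _j : ι, 1 := Finset.sum_le_sum fun j _ => hmgf j
      _ = N := by simp [N]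
  have hpt : ∀ ω, ⨆ j, Z j ω ≤ (G ω / N + (log N - 1)) / t := fun ω =>
    ciSup_le fun j => (le_div_iff₀ ht).2 <| by
      rw [mul_comm]
      have hG_pos : 0 < G ω := Finset.sum_pos (fun k _ => exp_pos _) Finset.univ_nonempty
      linarith [le_log_sum_exp (fun k => t * Z k ω) j, log_le_div_add_log_sub_one hG_pos hN]
  by_cases hF : Integrable (fun ω => ⨆ j, Z j ω) μ
  · have hbound_int : Integrable (fun ω => (G ω / N + (log N - 1)) / t) μ :=
      ((hG_int.div_const N).add (integrable_const _)).div_const t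
    calc ∫ ω, ⨆ j, Z j ω ∂μ ≤ ∫ ω, (G ω / N + (log N - 1)) / t ∂μ :=
          integral_mono hF hbound_int hpt
      _ = ((∫ ω, G ω ∂μ) / N + (log N - 1)) / t := by
        rw [integral_div, integral_add (hG_int.div_const N) (integrable_const _), integral_div]
        simp
      _ ≤ log N / t := by
        gcongr
        linarith [(div_le_one hN).2 hG_le]
  · rw [integral_undef hF]
    exact div_nonneg (log_nonneg (Nat.one_le_cast.2 Fintype.card_pos)) ht.le

end MaximalInequality

theorem offset_rademacher_finite_class_bound_general
    {Ω : Type*} [MeasureSpace Ω] [IsProbabilityMeasure (ℙ : Measure Ω)]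
    {n N : ℕ} (hn : 1 ≤ n) (hN : 1 ≤ N)
    (B : ℝ) (hB : 0 < B)
    (ξ : Fin n → Ω → ℝ) (hmeas : ∀ i, Measurable (ξ i))
    (hval : ∀ i ω, ξ i ω = 1 ∨ ξ i ω = -1)
    (hsym : ∀ i, (ℙ : Measure Ω) {ω | ξ i ω = 1} = 1 / 2)
    (hindep : iIndepFun ξ (ℙ : Measure Ω))
    (a : Fin N → Fin n → ℝ) :
    (∫ ω, (⨆ j, ((3 / (n : ℝ)) * ∑ i, ξ i ω * a j i
        - (1 / (4 * B ^ 2 * (n : ℝ))) * ∑ i, (a j i) ^ 2)) ∂(ℙ : Measure Ω))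
      ≤ 18 * B ^ 2 * (Real.log N + 1) / n := by
  have : Nonempty (Fin N) := ⟨⟨0, hN⟩⟩
  set t : ℝ := n / (18 * B ^ 2)
  set c : Fin N → ℝ≥0 := fun j => (3 / n : ℝ≥0) ^ 2 * ∑ i, ‖a j i‖₊ ^ 2
  have hS : ∀ j, HasSubgaussianMGF (fun ω => 3 / (n : ℝ) * ∑ i, ξ i ω * a j i) (c j) ℙ := by
    intro j
    convert (HasSubgaussianMGF.sum_mul_of_iIndepFun hindep
      (fun i _ => hasSubgaussianMGF_one_of_rademacher (hmeas i) (hval i) (hsym i)) (a j)).const_mul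
      (3 / n) using 1
    simp only [c, mul_one]
    congr 1
  have hoffset : ∀ j, 1 / (4 * B ^ 2 * n) * ∑ i, a j i ^ 2 = c j * t / 2 := by
    intro j
    push_cast [c, t, norm_eq_abs, sq_abs]
    field_simp
    ring
  simp only [hoffset]
  calc _ ≤ log (Fintype.card (Fin N)) / t := integral_iSup_le_log_card_div (by positivity)
        (fun j => (hS j).integrable_exp_mul_sub t _) fun j => (hS j).mgf_sub_le_one t
    _ ≤ 18 * B ^ 2 * (log N + 1) / n := by
      rw [Fintype.card_fin, div_div_eq_mul_div, mul_comm]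
      gcongr
      linarith

/-- finite-class offset Rademacher complexity bound, equation
(eq:lemma:generalization:1:4) in the proof of Lemma I.1 of the paper. If
`ξ₁, …, ξ_n` are independent Rademacher variables and `a⁽¹⁾, …, a⁽ᴺ⁾ ∈ ℝⁿ` are fixed
vectors with entries in `[0, 4B²]`, then
`E[max_j ((3/n) ∑ᵢ ξᵢ a⁽ʲ⁾ᵢ - (1/(4B²n)) ∑ᵢ (a⁽ʲ⁾ᵢ)²)] ≤ 18B²(log N + 1)/n`. -/
theorem offset_rademacher_finite_class_bound
    {Ω : Type*} [MeasureSpace Ω] [IsProbabilityMeasure (ℙ : Measure Ω)]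
    {n N : ℕ} (hn : 1 ≤ n) (hN : 1 ≤ N)
    (B : ℝ) (hB : 0 < B)
    (ξ : Fin n → Ω → ℝ) (hmeas : ∀ i, Measurable (ξ i))
    (hval : ∀ i ω, ξ i ω = 1 ∨ ξ i ω = -1)
    (hsym : ∀ i, (ℙ : Measure Ω) {ω | ξ i ω = 1} = 1 / 2)
    (hindep : iIndepFun ξ (ℙ : Measure Ω))
    (a : Fin N → Fin n → ℝ)
    (ha : ∀ j i, a j i ∈ Set.Icc (0 : ℝ) (4 * B ^ 2)) :
    (∫ ω, (⨆ j, ((3 / (n : ℝ)) * ∑ i, ξ i ω * a j i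
        - (1 / (4 * B ^ 2 * (n : ℝ))) * ∑ i, (a j i) ^ 2)) ∂(ℙ : Measure Ω))
      ≤ 18 * B ^ 2 * (Real.log N + 1) / n :=
  offset_rademacher_finite_class_bound_general hn hN B hB ξ hmeas hval hsym hindep a
end
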